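/- In a unit-hereditary inverse semigroup with zero, if nonzero elements x and y have a common nonzero lower bound, then (x·x⁻¹)·y = (y·y⁻¹)·x = y·(x⁻¹·x) = x·(y⁻¹·y). -/
import Mathlib


/-- An inverse semigroup: a semigroup in which every element `a` has a unique
inverse `a⁻¹` satisfying `a * a⁻¹ * a = a` and `a⁻¹ * a * a⁻¹ = a⁻¹`. -/
class InvSemigroup (S : Type*) extends Semigroup S, Inv S where
  mul_inv_mul : ∀ a : S, a * a⁻¹ * a = a
  inv_mul_inv : ∀ a : S, a⁻¹ * a * a⁻¹ = a⁻¹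
  inv_unique : ∀ a x : S, a * x * a = a → x * a * x = x → x = a⁻¹

/-- The natural order on an inverse semigroup. -/
def nle {S : Type*} [InvSemigroup S] (x y : S) : Prop := x * x⁻¹ = x * y⁻¹

/-- An inverse semigroup with a zero element. -/
class InvSemigroupWithZero (S : Type*) extends InvSemigroup S, Zero S where
  zero_mul : ∀ a : S, 0 * a = 0
  mul_zero : ∀ a : S, a * 0 = 0

/-- Minimal among nonzero elements w.r.t. the natural order. -/
def MinNZ {S : Type*} [InvSemigroupWithZero S] (m : S) : Prop :=
  m ≠ 0 ∧ ∀ z : S, z ≠ 0 → nle z m → z = m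

section Helpers
variable {S : Type*} [InvSemigroup S]

lemma is_inv_inv (a : S) : (a⁻¹)⁻¹ = a :=
  (InvSemigroup.inv_unique a⁻¹ a (InvSemigroup.inv_mul_inv a)
    (InvSemigroup.mul_inv_mul a)).symm

lemma idem_inv {e : S} (he : e * e = e) : e⁻¹ = e :=
  (InvSemigroup.inv_unique e e (by rw [he, he]) (by rw [he, he])).symm

lemma idem_mul_idem {e f : S} (he : e * e = e) (hf : f * f = f) :
    (e * f) * (e * f) = e * f := by
  -- g := (e*f)⁻¹ ; h := f * g * e is an inverse of e*f, hence h = g, and h is idempotent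
  set g := (e * f)⁻¹ with hg
  have hgef : e * f * g * (e * f) = e * f := InvSemigroup.mul_inv_mul (e * f)
  have hgg : g * (e * f) * g = g := InvSemigroup.inv_mul_inv (e * f)
  have h1 : (e * f) * (f * g * e) * (e * f) = e * f := by
    have : (e * f) * (f * g * e) * (e * f) = e * (f * f) * g * (e * e) * f := by
      simp only [mul_assoc]
    rw [this, hf, he]
    have : e * f * g * (e * f) = e * f * g * e * f := by simp only [mul_assoc]
    rw [← this, hgef]
  have h2 : (f * g * e) * (e * f) * (f * g * e) = f * g * e := by
    have : (f * g * e) * (e * f) * (f * g * e) = f * (g * ((e * e) * (f * f)) * g) * e := by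
      simp only [mul_assoc]
    rw [this, he, hf, hgg]
  have hfge : f * g * e = g := InvSemigroup.inv_unique (e * f) (f * g * e) h1 h2
  have hidem : g * g = g := by
    rw [← hfge]
    have : (f * g * e) * (f * g * e) = f * (g * (e * f) * g) * e := by
      simp only [mul_assoc]
    rw [this, hgg]
  have : g⁻¹ = e * f := by rw [hg, is_inv_inv]
  rw [← this, idem_inv hidem, hidem]

lemma idem_comm {e f : S} (he : e * e = e) (hf : f * f = f) :
    e * f = f * e := by
  have hef : (e * f) * (e * f) = e * f := idem_mul_idem he hf
  have hfe : (f * e) * (f * e) = f * e := idem_mul_idem hf he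
  -- f*e is an inverse of e*f
  have h1 : (e * f) * (f * e) * (e * f) = e * f := by
    have : (e * f) * (f * e) * (e * f) = e * (f * f) * (e * e) * f := by
      simp only [mul_assoc]
    rw [this, hf, he]
    calc e * f * e * f = (e * f) * (e * f) := by simp only [mul_assoc]
      _ = e * f := hef
  have h2 : (f * e) * (e * f) * (f * e) = f * e := by
    have : (f * e) * (e * f) * (f * e) = f * (e * e) * (f * f) * e := by
      simp only [mul_assoc]
    rw [this, he, hf]
    calc f * e * f * e = (f * e) * (f * e) := by simp only [mul_assoc]
      _ = f * e := hfe
  have : f * e = (e * f)⁻¹ := InvSemigroup.inv_unique (e * f) (f * e) h1 h2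
  rw [idem_inv hef] at this
  exact this.symm

lemma mul_inv_rev' (a b : S) : (a * b)⁻¹ = b⁻¹ * a⁻¹ := by
  have hbb : (b * b⁻¹) * (b * b⁻¹) = b * b⁻¹ := by
    calc b * b⁻¹ * (b * b⁻¹) = (b * b⁻¹ * b) * b⁻¹ := by simp only [mul_assoc]
      _ = b * b⁻¹ := by rw [InvSemigroup.mul_inv_mul]
  have haa : (a⁻¹ * a) * (a⁻¹ * a) = a⁻¹ * a := by
    calc a⁻¹ * a * (a⁻¹ * a) = (a⁻¹ * a * a⁻¹) * a := by simp only [mul_assoc]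
      _ = a⁻¹ * a := by rw [InvSemigroup.inv_mul_inv]
  have hcomm := idem_comm hbb haa
  have h1 : (a * b) * (b⁻¹ * a⁻¹) * (a * b) = a * b := by
    have : (a * b) * (b⁻¹ * a⁻¹) * (a * b) = a * ((b * b⁻¹) * (a⁻¹ * a)) * b := by
      simp only [mul_assoc]
    rw [this, hcomm]
    calc a * (a⁻¹ * a * (b * b⁻¹)) * b = (a * a⁻¹ * a) * (b * b⁻¹ * b) := by
          simp only [mul_assoc]
      _ = a * b := by rw [InvSemigroup.mul_inv_mul, InvSemigroup.mul_inv_mul]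
  have h2 : (b⁻¹ * a⁻¹) * (a * b) * (b⁻¹ * a⁻¹) = b⁻¹ * a⁻¹ := by
    have : (b⁻¹ * a⁻¹) * (a * b) * (b⁻¹ * a⁻¹) = b⁻¹ * ((a⁻¹ * a) * (b * b⁻¹)) * a⁻¹ := by
      simp only [mul_assoc]
    rw [this, ← hcomm]
    calc b⁻¹ * (b * b⁻¹ * (a⁻¹ * a)) * a⁻¹ = (b⁻¹ * b * b⁻¹) * (a⁻¹ * a * a⁻¹) := by
          simp only [mul_assoc]
      _ = b⁻¹ * a⁻¹ := by rw [InvSemigroup.inv_mul_inv, InvSemigroup.inv_mul_inv]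
  exact (InvSemigroup.inv_unique (a * b) (b⁻¹ * a⁻¹) h1 h2).symm

lemma rr_idem (a : S) : (a * a⁻¹) * (a * a⁻¹) = a * a⁻¹ := by
  calc a * a⁻¹ * (a * a⁻¹) = (a * a⁻¹ * a) * a⁻¹ := by simp only [mul_assoc]
    _ = a * a⁻¹ := by rw [InvSemigroup.mul_inv_mul]

lemma dd_idem (a : S) : (a⁻¹ * a) * (a⁻¹ * a) = a⁻¹ * a := by
  calc a⁻¹ * a * (a⁻¹ * a) = (a⁻¹ * a * a⁻¹) * a := by simp only [mul_assoc]
    _ = a⁻¹ * a := by rw [InvSemigroup.inv_mul_inv]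

-- from nle z y : derived facts
lemma nle_facts {z y : S} (h : nle z y) :
    z * z⁻¹ * y = z ∧ z⁻¹ * y = z⁻¹ * z := by
  have h' : z * z⁻¹ = z * y⁻¹ := h
  have hz : z * y⁻¹ * z = z := by rw [← h', InvSemigroup.mul_inv_mul]
  -- y * z⁻¹ = z * z⁻¹
  have hyz : y * z⁻¹ = z * z⁻¹ := by
    have : (z * y⁻¹)⁻¹ = y * z⁻¹ := by rw [mul_inv_rev', is_inv_inv]
    rw [← this, ← h', idem_inv (rr_idem z)]
  -- z⁻¹ * y idempotent
  have hfidem : (z⁻¹ * y) * (z⁻¹ * y) = z⁻¹ * y := by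
    calc (z⁻¹ * y) * (z⁻¹ * y) = z⁻¹ * (y * z⁻¹) * y := by simp only [mul_assoc]
      _ = z⁻¹ * (z * z⁻¹) * y := by rw [hyz]
      _ = (z⁻¹ * z * z⁻¹) * y := by simp only [mul_assoc]
      _ = z⁻¹ * y := by rw [InvSemigroup.inv_mul_inv]
  have hfinv : y⁻¹ * z = z⁻¹ * y := by
    have : (z⁻¹ * y)⁻¹ = y⁻¹ * z := by rw [mul_inv_rev', is_inv_inv]
    rw [← this, idem_inv hfidem]
  have h1 : z * z⁻¹ * y = z := by
    calc z * z⁻¹ * y = z * (z⁻¹ * y) := by rw [mul_assoc]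
      _ = z * (y⁻¹ * z) := by rw [hfinv]
      _ = (z * y⁻¹) * z := by rw [mul_assoc]
      _ = z := hz
  have h2 : z⁻¹ * y = z⁻¹ * z := by
    calc z⁻¹ * y = z⁻¹ * z * z⁻¹ * y := by rw [InvSemigroup.inv_mul_inv]
      _ = z⁻¹ * (z * z⁻¹ * y) := by simp only [mul_assoc]
      _ = z⁻¹ * z := by rw [h1]
  exact ⟨h1, h2⟩

end Helpers

/-- In a unit-hereditary inverse semigroup with zero, if nonzero `x, y` have a
common nonzero lower bound then `r x * y = r y * x = y * d x = x * d y`. -/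
theorem stmt11 {S : Type*} [InvSemigroupWithZero S]
    (hUH : ∀ e c : S, e ≠ 0 → e * e = e → nle e c → c * c = c)
    (x y : S) (hx : x ≠ 0) (hy : y ≠ 0)
    (h : ∃ z : S, z ≠ 0 ∧ nle z x ∧ nle z y) :
    (x * x⁻¹) * y = (y * y⁻¹) * x ∧ (y * y⁻¹) * x = y * (x⁻¹ * x) ∧
      y * (x⁻¹ * x) = x * (y⁻¹ * y) := by
  obtain ⟨z, hz, hzx, hzy⟩ := h
  obtain ⟨hzx1, hzx2⟩ := nle_facts hzx
  obtain ⟨hzy1, hzy2⟩ := nle_facts hzy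
  have hzz : z * z⁻¹ ≠ 0 := by
    intro h0
    apply hz
    calc z = z * z⁻¹ * z := (InvSemigroup.mul_inv_mul z).symm
      _ = 0 * z := by rw [h0]
      _ = 0 := InvSemigroupWithZero.zero_mul z
  have hzz' : z⁻¹ * z ≠ 0 := by
    intro h0
    apply hz
    calc z = z * z⁻¹ * z := (InvSemigroup.mul_inv_mul z).symm
      _ = z * (z⁻¹ * z) := by rw [mul_assoc]
      _ = z * 0 := by rw [h0]
      _ = 0 := InvSemigroupWithZero.mul_zero z
  -- c := x * y⁻¹ is idempotent
  have hc : (x * y⁻¹) * (x * y⁻¹) = x * y⁻¹ := by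
    apply hUH (z * z⁻¹) _ hzz (rr_idem z)
    show z * z⁻¹ * (z * z⁻¹)⁻¹ = z * z⁻¹ * (x * y⁻¹)⁻¹
    rw [idem_inv (rr_idem z), rr_idem z, mul_inv_rev', is_inv_inv]
    calc z * z⁻¹ = z * x⁻¹ := by
          rw [show z * x⁻¹ = z * z⁻¹ from hzx.symm]
      _ = (z * z⁻¹ * y) * x⁻¹ := by rw [hzy1]
      _ = z * z⁻¹ * (y * x⁻¹) := by simp only [mul_assoc]
  -- d := x⁻¹ * y is idempotent
  have hd : (x⁻¹ * y) * (x⁻¹ * y) = x⁻¹ * y := by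
    apply hUH (z⁻¹ * z) _ hzz' (dd_idem z)
    show z⁻¹ * z * (z⁻¹ * z)⁻¹ = z⁻¹ * z * (x⁻¹ * y)⁻¹
    rw [idem_inv (dd_idem z), dd_idem z, mul_inv_rev', is_inv_inv]
    symm
    calc z⁻¹ * z * (y⁻¹ * x) = z⁻¹ * (z * y⁻¹) * x := by simp only [mul_assoc]
      _ = z⁻¹ * (z * z⁻¹) * x := by rw [show z * z⁻¹ = z * y⁻¹ from hzy]
      _ = (z⁻¹ * z * z⁻¹) * x := by simp only [mul_assoc]
      _ = z⁻¹ * x := by rw [InvSemigroup.inv_mul_inv]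
      _ = z⁻¹ * z := hzx2
  -- hence c = c⁻¹ : x*y⁻¹ = y*x⁻¹, and d = d⁻¹ : x⁻¹*y = y⁻¹*x
  have hcsym : x * y⁻¹ = y * x⁻¹ := by
    have : (x * y⁻¹)⁻¹ = y * x⁻¹ := by rw [mul_inv_rev', is_inv_inv]
    rw [← this, idem_inv hc]
  have hdsym : x⁻¹ * y = y⁻¹ * x := by
    have : (x⁻¹ * y)⁻¹ = y⁻¹ * x := by rw [mul_inv_rev', is_inv_inv]
    rw [← this, idem_inv hd]
  -- A := x*x⁻¹*y = y*x⁻¹*x ; B := y*y⁻¹*x = x*y⁻¹*y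
  have hA : x * x⁻¹ * y = y * (x⁻¹ * x) := by
    calc x * x⁻¹ * y = x * (x⁻¹ * y) := by rw [mul_assoc]
      _ = x * (y⁻¹ * x) := by rw [hdsym]
      _ = (x * y⁻¹) * x := by rw [mul_assoc]
      _ = (y * x⁻¹) * x := by rw [hcsym]
      _ = y * (x⁻¹ * x) := by rw [mul_assoc]
  have hB : y * y⁻¹ * x = x * (y⁻¹ * y) := by
    calc y * y⁻¹ * x = y * (y⁻¹ * x) := by rw [mul_assoc]
      _ = y * (x⁻¹ * y) := by rw [← hdsym]
      _ = (y * x⁻¹) * y := by rw [mul_assoc]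
      _ = (x * y⁻¹) * y := by rw [← hcsym]
      _ = x * (y⁻¹ * y) := by rw [mul_assoc]
  -- A = B
  have hcc' : (y * x⁻¹) * (y * x⁻¹) = y * x⁻¹ := by rw [← hcsym]; exact hc
  have hAB : y * (x⁻¹ * x) = x * (y⁻¹ * y) := by
    have step1 : y * (x⁻¹ * x) = (y * x⁻¹) * (y * (x⁻¹ * x)) := by
      calc y * (x⁻¹ * x) = (y * x⁻¹) * x := by rw [mul_assoc]
        _ = ((y * x⁻¹) * (y * x⁻¹)) * x := by rw [hcc']
        _ = (y * x⁻¹) * ((y * x⁻¹) * x) := by simp only [mul_assoc]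
        _ = (y * x⁻¹) * (y * (x⁻¹ * x)) := by simp only [mul_assoc]
    have comm := idem_comm (dd_idem y) (dd_idem x)
    calc y * (x⁻¹ * x) = (y * x⁻¹) * (y * (x⁻¹ * x)) := step1
      _ = (x * y⁻¹) * (y * (x⁻¹ * x)) := by rw [← hcsym]
      _ = x * ((y⁻¹ * y) * (x⁻¹ * x)) := by simp only [mul_assoc]
      _ = x * ((x⁻¹ * x) * (y⁻¹ * y)) := by rw [comm]
      _ = (x * x⁻¹ * x) * (y⁻¹ * y) := by simp only [mul_assoc]
      _ = x * (y⁻¹ * y) := by rw [InvSemigroup.mul_inv_mul]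
  refine ⟨?_, ?_, hAB⟩
  · rw [hA, hB, hAB]
  · rw [hB, ← hAB]
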